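/- arXiv:2405.12992 — 4 statements merged into one kernel-verified Lean document; each statement's English description precedes it below -/
import Mathlib

section
/- Let E be a Euclidean space (a finite-dimensional real inner product space, of any dimension) and let K ⊆ E × E be MW-convex. If there exists a witness for K, then there exists a sequence (u_n)_{n∈ℕ} in E such that (u_n, u_{n+1}) ∈ K for all n ∈ ℕ. -/
open Pointwise

/-- The recession cone of a set `K`. -/
def recCone {E : Type*} [AddCommGroup E] [Module ℝ E] (K : Set E) : Set E :=
  {z | ∀ w ∈ K, ∀ l : ℝ, 0 ≤ l → w + l • z ∈ K}

/-- A set is MW-convex if it is closed, convex, and is the sum of a compact convex set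
and its recession cone. -/
def IsMWConvex {E : Type*} [NormedAddCommGroup E] [NormedSpace ℝ E] (K : Set E) : Prop :=
  IsClosed K ∧ Convex ℝ K ∧
    ∃ K' : Set E, IsCompact K' ∧ Convex ℝ K' ∧ K = K' + recCone K

/-- A witness of non-termination for a relation `K ⊆ E × E`: a linear map `M`, a closed
cone `C`, and vectors `v, w`, such that `M C ⊆ C`, `(x, M x) ∈ rec K` for `x ∈ C`,
`(v, w) ∈ K` and `w - v ∈ C`. -/
def HasWitness {E : Type*} [NormedAddCommGroup E] [NormedSpace ℝ E] (K : Set (E × E)) : Prop :=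
  ∃ (M : E →ₗ[ℝ] E) (C : Set E) (v w : E),
    IsClosed C ∧
    (∀ x ∈ C, ∀ l : ℝ, 0 ≤ l → l • x ∈ C) ∧
    (∀ x ∈ C, M x ∈ C) ∧
    (∀ x ∈ C, ((x, M x) : E × E) ∈ recCone K) ∧
    (v, w) ∈ K ∧
    w - v ∈ C

/-!
Starting from `v`, keep adding the successive images `d, M d, M² d, …` of `d = w - v`. The
first step is `(v, w) ∈ K`, and each later step is the previous one shifted by `(x, M x)` with
`x = Mⁿ d ∈ C`, a direction of the recession cone of `K`.
-/

open Finset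

lemma add_mem_of_mem_recCone {E : Type*} [AddCommGroup E] [Module ℝ E] {K : Set E} {z p : E}
    (hz : z ∈ recCone K) (hp : p ∈ K) : p + z ∈ K := by
  simpa using hz p hp 1 zero_le_one

section

variable {E : Type*} [AddCommGroup E]

def witnessSeq (M : E → E) (v d : E) (n : ℕ) : E :=
  v + ∑ i ∈ range n, M^[i] d

lemma witnessSeq_zero (M : E → E) (v d : E) : witnessSeq M v d 0 = v := by
  simp [witnessSeq]

lemma witnessSeq_succ (M : E → E) (v d : E) (n : ℕ) :
    witnessSeq M v d (n + 1) = witnessSeq M v d n + M^[n] d := by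
  simp only [witnessSeq, sum_range_succ, add_assoc]

theorem witnessSeq_mem [Module ℝ E] {K : Set (E × E)} {M : E → E} {C : Set E} {v w : E}
    (hMC : Set.MapsTo M C C) (hrec : ∀ x ∈ C, (x, M x) ∈ recCone K)
    (hvw : (v, w) ∈ K) (hwv : w - v ∈ C) (n : ℕ) :
    (witnessSeq M v (w - v) n, witnessSeq M v (w - v) (n + 1)) ∈ K := by
  induction n with
  | zero => simpa [witnessSeq_succ, witnessSeq_zero] using hvw
  | succ n ih =>
    have hstep := add_mem_of_mem_recCone (hrec _ (hMC.iterate n hwv)) ih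
    simpa only [Prod.mk_add_mk, ← witnessSeq_succ, ← Function.iterate_succ_apply' M n]
      using hstep

end

theorem witness_implies_sequence_general
    {E : Type*} [NormedAddCommGroup E] [InnerProductSpace ℝ E]
    (K : Set (E × E)) (hwit : HasWitness K) :
    ∃ u : ℕ → E, ∀ n : ℕ, (u n, u (n + 1)) ∈ K := by
  obtain ⟨M, C, v, w, -, -, hMC, hrec, hvw, hwv⟩ := hwit
  exact ⟨witnessSeq M v (w - v), witnessSeq_mem hMC hrec hvw hwv⟩

theorem witness_implies_sequence
    {E : Type*} [NormedAddCommGroup E] [InnerProductSpace ℝ E] [FiniteDimensional ℝ E]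
    (K : Set (E × E)) (hK : IsMWConvex K) (hwit : HasWitness K) :
    ∃ u : ℕ → E, ∀ n : ℕ, (u n, u (n + 1)) ∈ K :=
  witness_implies_sequence_general K hwit
end

section
/- Let E be a Euclidean space of dimension 1 and let K ⊆ E × E be MW-convex. Suppose (u_n)_{n∈ℕ} is a sequence in E with (u_n, u_{n+1}) ∈ K for all n ∈ ℕ, and suppose γ ∈ Cone(D_u) satisfies (0, γ) ∈ rec(K) (note that γ = 0 always satisfies these conditions). Then there exist a real number a ≠ 0, a closed convex cone C ⊆ E, and points x, y ∈ E such that: (i) aC ⊆ C; (ii) for all c ∈ C, (c, ac) ∈ rec(K); (iii) (x, y) ∈ K; (iv) y − x ∈ C; (v) γ ∈ C. -/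
open Pointwise

open Filter Topology

/-- The set of principal directions of a sequence: unit vectors `z` such that some
subsequence has norm tending to infinity and direction tending to `z`. -/
def principalDirections {E : Type*} [NormedAddCommGroup E] [InnerProductSpace ℝ E]
    (u : ℕ → E) : Set E :=
  {z | ‖z‖ = 1 ∧ ∃ φ : ℕ → ℕ, StrictMono φ ∧
    Tendsto (fun n => ‖u (φ n)‖) atTop atTop ∧
    Tendsto (fun n => ‖u (φ n)‖⁻¹ • u (φ n)) atTop (nhds z)}

/-- The conic hull of a set: all finite nonnegative linear combinations of its elements
(including `0`). -/
def coneHull {E : Type*} [AddCommGroup E] [Module ℝ E] (S : Set E) : Set E :=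
  {y | ∃ (m : ℕ) (c : Fin m → ℝ) (x : Fin m → E),
    (∀ i, 0 ≤ c i) ∧ (∀ i, x i ∈ S) ∧ y = ∑ i, c i • x i}

/-!
Identify `E` with `ℝ` through a linear isomorphism `ℓ` and separate `rec K` from the open quadrant
`{p | 0 < ℓ p.1 ∧ 0 < ℓ p.2}`. Either `rec K` meets the quadrant in some `r`, and then the half-line
`{ℓ ≥ 0}` with `a = ℓ r.2 / ℓ r.1` works, starting from any step `ℓ (u n) ≤ ℓ (u (n+1))`. Or some
`α, β ≥ 0`, not both zero, make `α ℓ p.1 + β ℓ p.2` nonpositive on `rec K`, hence bounded above on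
`K = K' + rec K`; then an unbounded `ℓ ∘ u` cannot be monotone, and `(0, γ) ∈ rec K` forces
`ℓ γ ≤ 0`.

If `γ ≠ 0`, take the sign of `ℓ` with `ℓ γ > 0`: a principal direction `z` with `ℓ z > 0` makes
`ℓ ∘ u` unbounded above, so we are in the first case. If `γ = 0`, `C = {0}` works once `K` meets the
diagonal, which happens by convexity when `u` steps in both directions and by closedness when `u` is
monotone and bounded; otherwise `ℓ ∘ u` is monotone and unbounded above for one sign of `ℓ`.
-/

open Set

section RecCone

variable {F : Type*} [AddCommGroup F] [Module ℝ F] {K : Set F}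

lemma zero_mem_recCone (K : Set F) : (0 : F) ∈ recCone K :=
  fun w hw _ _ => by simpa using hw

lemma smul_mem_recCone {z : F} (hz : z ∈ recCone K) {t : ℝ} (ht : 0 ≤ t) : t • z ∈ recCone K := by
  intro w hw l hl
  simpa [smul_smul] using hz w hw (l * t) (mul_nonneg hl ht)

lemma Convex.recCone (hK : Convex ℝ K) : Convex ℝ (recCone K) := by
  intro z₁ hz₁ z₂ hz₂ a b ha hb hab w hw l hl
  convert hK (hz₁ w hw l hl) (hz₂ w hw l hl) ha hb hab using 1
  have hw : w = (a + b) • w := by rw [hab, one_smul]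
  conv_lhs => rw [hw]
  module

end RecCone

lemma IsMWConvex.bddAbove_image {F : Type*} [NormedAddCommGroup F] [NormedSpace ℝ F] {K : Set F}
    (hK : IsMWConvex K) (f : F →L[ℝ] ℝ) (hf : ∀ r ∈ recCone K, f r ≤ 0) : BddAbove (f '' K) := by
  obtain ⟨-, -, K', hK'c, -, hKeq⟩ := hK
  obtain ⟨M, hM⟩ := hK'c.bddAbove_image f.continuous.continuousOn
  refine ⟨M, ?_⟩
  rintro _ ⟨p, hp, rfl⟩
  rw [hKeq] at hp
  obtain ⟨k, hk, r, hr, rfl⟩ := mem_add.1 hp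
  rw [map_add]
  linarith [hf r hr, hM ⟨k, hk, rfl⟩]

lemma exists_pos_of_mem_coneHull {F : Type*} [AddCommGroup F] [Module ℝ F] (f : F →ₗ[ℝ] ℝ)
    {S : Set F} {y : F} (hy : y ∈ coneHull S) (hpos : 0 < f y) : ∃ z ∈ S, 0 < f z := by
  obtain ⟨m, c, x, hc, hx, rfl⟩ := hy
  by_contra! h
  rw [map_sum] at hpos
  refine hpos.not_ge (Finset.sum_nonpos fun i _ => ?_)
  rw [map_smul, smul_eq_mul]
  exact mul_nonpos_of_nonneg_of_nonpos (hc i) (h _ (hx i))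

section PrincipalDirections

variable {E : Type*} [NormedAddCommGroup E] [InnerProductSpace ℝ E] {u : ℕ → E}

lemma not_bddAbove_of_mem_principalDirections (f : E →L[ℝ] ℝ) {z : E}
    (hz : z ∈ principalDirections u) (hpos : 0 < f z) : ¬BddAbove (range fun n => f (u n)) := by
  obtain ⟨-, φ, -, hnorm, hdir⟩ := hz
  have hprod : Tendsto (fun n => ‖u (φ n)‖ * f (‖u (φ n)‖⁻¹ • u (φ n))) atTop atTop :=
    hnorm.atTop_mul_pos hpos ((f.continuous.tendsto z).comp hdir)
  have hφ : Tendsto (fun n => f (u (φ n))) atTop atTop :=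
    hprod.congr' <| (hnorm.eventually_gt_atTop 0).mono fun n hn => by
      rw [map_smul, smul_eq_mul, mul_inv_cancel_left₀ hn.ne']
  exact fun hb =>
    not_bddAbove_of_tendsto_atTop hφ (hb.mono (range_comp_subset_range φ fun n => f (u n)))

lemma not_bddAbove_of_mem_coneHull_principalDirections (f : E →L[ℝ] ℝ) {γ : E}
    (hγ : γ ∈ coneHull (principalDirections u)) (hpos : 0 < f γ) :
    ¬BddAbove (range fun n => f (u n)) := by
  obtain ⟨z, hz, hfz⟩ := exists_pos_of_mem_coneHull (f : E →ₗ[ℝ] ℝ) hγ hpos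
  exact not_bddAbove_of_mem_principalDirections f hz hfz

end PrincipalDirections

lemma exists_nonneg_coeffs_of_forall_pos_imp_nonpos {S : Set (ℝ × ℝ)} (hS : Convex ℝ S)
    (h0 : (0 : ℝ × ℝ) ∈ S) (hsmul : ∀ p ∈ S, ∀ t : ℝ, 0 ≤ t → t • p ∈ S)
    (hquad : ∀ p ∈ S, 0 < p.1 → p.2 ≤ 0) :
    ∃ α β : ℝ, 0 ≤ α ∧ 0 ≤ β ∧ 0 < α + β ∧ ∀ p ∈ S, α * p.1 + β * p.2 ≤ 0 := by
  have hdisj : Disjoint (Ioi (0 : ℝ) ×ˢ Ioi (0 : ℝ)) S :=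
    disjoint_left.2 fun p hpQ hpS => (hquad p hpS hpQ.1).not_gt hpQ.2
  obtain ⟨f, s, hfQ, hfS⟩ := geometric_hahn_banach_open ((convex_Ioi 0).prod (convex_Ioi 0))
    (isOpen_Ioi.prod isOpen_Ioi) hS hdisj
  have hs : s ≤ 0 := by simpa using hfS 0 h0
  have hfS' : ∀ p ∈ S, 0 ≤ f p := by
    intro p hp
    by_contra! hneg
    have := hfS _ (hsmul p hp ((s - 1) / f p) (div_nonneg_of_nonpos (by linarith) hneg.le))
    rw [map_smul, smul_eq_mul, div_mul_cancel₀ _ hneg.ne] at this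
    linarith
  have hdec : ∀ p : ℝ × ℝ, f p = p.1 * f (1, 0) + p.2 * f (0, 1) := fun p => by
    conv_lhs => rw [show p = p.1 • ((1 : ℝ), (0 : ℝ)) + p.2 • ((0 : ℝ), (1 : ℝ)) by ext <;> simp]
    rw [map_add, map_smul, map_smul, smul_eq_mul, smul_eq_mul]
  have hQ : ∀ x y : ℝ, 0 < x → 0 < y → x * f (1, 0) + y * f (0, 1) < 0 := fun x y hx hy =>
    (hdec (x, y) ▸ hfQ (x, y) ⟨hx, hy⟩).trans_le hs
  have hray : ∀ a b : ℝ, (∀ x y : ℝ, 0 < x → 0 < y → x * a + y * b < 0) → a ≤ 0 := by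
    intro a b hab
    by_contra! ha
    have := hab ((|b| + 1) / a) 1 (by positivity) one_pos
    rw [div_mul_cancel₀ _ ha.ne'] at this
    linarith [neg_abs_le b]
  refine ⟨-f (1, 0), -f (0, 1), neg_nonneg.2 (hray _ _ hQ),
    neg_nonneg.2 (hray (f (0, 1)) (f (1, 0)) fun x y hx hy => by linarith [hQ y x hy hx]),
    by linarith [hQ 1 1 one_pos one_pos], fun p hp => by linarith [hdec p, hfS' p hp]⟩

lemma exists_le_succ_of_not_bddAbove {α : Type*} [LinearOrder α] {v : ℕ → α}
    (hv : ¬BddAbove (range v)) : ∃ n, v n ≤ v (n + 1) := by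
  by_contra! h
  exact hv ⟨v 0, by
    rintro _ ⟨n, rfl⟩
    exact antitone_nat_of_succ_le (fun n => (h n).le) (Nat.zero_le n)⟩

def HasConeWitness {E : Type*} [TopologicalSpace E] [AddCommGroup E] [Module ℝ E]
    (K : Set (E × E)) (γ : E) : Prop :=
  ∃ (a : ℝ) (C : Set E) (x y : E),
    a ≠ 0 ∧
    IsClosed C ∧ Convex ℝ C ∧
    (∀ c ∈ C, ∀ l : ℝ, 0 ≤ l → l • c ∈ C) ∧
    (∀ c ∈ C, a • c ∈ C) ∧
    (∀ c ∈ C, ((c, a • c) : E × E) ∈ recCone K) ∧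
    (x, y) ∈ K ∧
    y - x ∈ C ∧
    γ ∈ C

section Line

variable {E : Type*} [NormedAddCommGroup E] [NormedSpace ℝ E] {K : Set (E × E)} {u : ℕ → E}

lemma exists_bound_of_forall_pos_imp_nonpos (ℓ : E →L[ℝ] ℝ) (hK : IsMWConvex K)
    (hR : ∀ r ∈ recCone K, 0 < ℓ r.1 → ℓ r.2 ≤ 0) :
    ∃ α β M : ℝ, 0 ≤ α ∧ 0 ≤ β ∧ 0 < α + β ∧ (∀ r ∈ recCone K, α * ℓ r.1 + β * ℓ r.2 ≤ 0) ∧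
      ∀ p ∈ K, α * ℓ p.1 + β * ℓ p.2 ≤ M := by
  set Φ := ℓ.prodMap ℓ
  obtain ⟨α, β, hα, hβ, hαβ, hS⟩ := exists_nonneg_coeffs_of_forall_pos_imp_nonpos
    (S := Φ '' recCone K) (hK.2.1.recCone.linear_image (Φ : E × E →ₗ[ℝ] ℝ × ℝ))
    ⟨0, zero_mem_recCone K, map_zero Φ⟩
    (by rintro _ ⟨r, hr, rfl⟩ t ht; exact ⟨t • r, smul_mem_recCone hr ht, map_smul Φ t r⟩)
    (by rintro _ ⟨r, hr, rfl⟩; exact hR r hr)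
  have hR' : ∀ r ∈ recCone K, α * ℓ r.1 + β * ℓ r.2 ≤ 0 := fun r hr => hS _ ⟨r, hr, rfl⟩
  obtain ⟨M, hM⟩ := hK.bddAbove_image (α • ℓ.comp (.fst ℝ E E) + β • ℓ.comp (.snd ℝ E E))
    (by simpa using hR')
  exact ⟨α, β, M, hα, hβ, hαβ, hR', fun p hp => by simpa using hM ⟨p, hp, rfl⟩⟩

lemma nonpos_and_not_monotone_of_not_bddAbove (ℓ : E →L[ℝ] ℝ) (hK : IsMWConvex K)
    (hu : ∀ n, (u n, u (n + 1)) ∈ K) {γ : E} (hγ : ((0 : E), γ) ∈ recCone K)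
    (hunb : ¬BddAbove (range fun n => ℓ (u n))) (hR : ∀ r ∈ recCone K, 0 < ℓ r.1 → ℓ r.2 ≤ 0) :
    ℓ γ ≤ 0 ∧ ¬Monotone fun n => ℓ (u n) := by
  obtain ⟨α, β, M, hα, hβ, hαβ, hR', hbound⟩ := exists_bound_of_forall_pos_imp_nonpos ℓ hK hR
  have hstep : ∀ n, α * ℓ (u n) + β * ℓ (u (n + 1)) ≤ M := fun n => hbound _ (hu n)
  have hβpos : 0 < β := by
    refine hβ.lt_of_ne' fun hβ0 => hunb ⟨M / α, ?_⟩
    rintro _ ⟨n, rfl⟩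
    subst hβ0
    rw [le_div_iff₀ (by linarith)]
    linarith [hstep n]
  refine ⟨?_, fun hmono => hunb ⟨M / (α + β), ?_⟩⟩
  · have := hR' _ hγ
    simp only [map_zero, mul_zero, zero_add] at this
    nlinarith
  · rintro _ ⟨n, rfl⟩
    rw [le_div_iff₀ hαβ]
    nlinarith [hstep n, hmono (Nat.le_succ n)]

lemma hasConeWitness_zero_of_mem {x : E} (hx : (x, x) ∈ K) : HasConeWitness K 0 :=
  ⟨1, {0}, x, x, one_ne_zero, isClosed_singleton, convex_singleton 0, by simp, by simp,
    fun c hc => by rw [mem_singleton_iff.1 hc, smul_zero]; exact zero_mem_recCone K, hx, by simp,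
    rfl⟩

lemma hasConeWitness_of_pos_of_pos (ℓ : E ≃L[ℝ] ℝ) {r : E × E} (hr : r ∈ recCone K)
    (h₁ : 0 < ℓ r.1) (h₂ : 0 < ℓ r.2) {x y γ : E} (hxy : (x, y) ∈ K) (hle : ℓ x ≤ ℓ y)
    (hγ : 0 ≤ ℓ γ) : HasConeWitness K γ := by
  have ha : 0 < ℓ r.2 / ℓ r.1 := div_pos h₂ h₁
  refine ⟨ℓ r.2 / ℓ r.1, ℓ ⁻¹' Ici 0, x, y, ha.ne', isClosed_Ici.preimage ℓ.continuous,
    (convex_Ici 0).linear_preimage (ℓ : E →ₗ[ℝ] ℝ), fun c hc l hl => ?_, fun c hc => ?_,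
    fun c hc => ?_, hxy, ?_, hγ⟩
  · simpa using mul_nonneg hl hc
  · simpa using mul_nonneg ha.le hc
  · -- `(c, a • c)` is the nonnegative multiple `(ℓ c / ℓ r.1) • r` of `r`
    convert smul_mem_recCone hr (div_nonneg hc h₁.le) using 1
    ext <;> apply ℓ.injective <;> simp <;> field_simp
  · simpa using hle

lemma exists_mem_diag_of_le_of_le (ℓ : E ≃L[ℝ] ℝ) (hK : Convex ℝ K)
    (hu : ∀ n, (u n, u (n + 1)) ∈ K) {i j : ℕ} (hi : ℓ (u i) ≤ ℓ (u (i + 1)))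
    (hj : ℓ (u (j + 1)) ≤ ℓ (u j)) : ∃ x, (x, x) ∈ K := by
  set δ : E × E →ₗ[ℝ] ℝ := (ℓ : E →ₗ[ℝ] ℝ).comp (LinearMap.snd ℝ E E - LinearMap.fst ℝ E E)
  have hδ : ∀ p, δ p = ℓ p.2 - ℓ p.1 := by simp [δ]
  obtain ⟨⟨x, y⟩, hxy, h0⟩ : (0 : ℝ) ∈ δ '' K :=
    (convex_iff_ordConnected.1 (hK.linear_image δ)).out ⟨_, hu j, rfl⟩ ⟨_, hu i, rfl⟩
      ⟨by rw [hδ]; linarith, by rw [hδ]; linarith⟩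
  obtain rfl : y = x := ℓ.injective (by rw [hδ] at h0; linarith)
  exact ⟨y, hxy⟩

lemma exists_mem_diag_of_monotone_of_bddAbove (ℓ : E ≃L[ℝ] ℝ) (hK : IsClosed K)
    (hu : ∀ n, (u n, u (n + 1)) ∈ K) (hmono : Monotone fun n => ℓ (u n))
    (hbdd : BddAbove (range fun n => ℓ (u n))) : ∃ x, (x, x) ∈ K := by
  have hlim : Tendsto u atTop (𝓝 (ℓ.symm (⨆ n, ℓ (u n)))) := by
    simpa [Function.comp_def] using
      (ℓ.symm.continuous.tendsto _).comp (tendsto_atTop_ciSup hmono hbdd)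
  exact ⟨_, hK.mem_of_tendsto (hlim.prodMk_nhds (hlim.comp (tendsto_add_atTop_nat 1)))
    (Eventually.of_forall hu)⟩

lemma monotone_or_antitone_of_forall_not_mem_diag (ℓ : E ≃L[ℝ] ℝ) (hK : Convex ℝ K)
    (hu : ∀ n, (u n, u (n + 1)) ∈ K) (hdiag : ∀ x, (x, x) ∉ K) :
    (Monotone fun n => ℓ (u n)) ∨ Antitone fun n => ℓ (u n) := by
  by_contra! h
  obtain ⟨j, hj⟩ : ∃ j, ℓ (u (j + 1)) ≤ ℓ (u j) := by
    by_contra! h'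
    exact h.1 (monotone_nat_of_le_succ fun n => (h' n).le)
  obtain ⟨i, hi⟩ : ∃ i, ℓ (u i) ≤ ℓ (u (i + 1)) := by
    by_contra! h'
    exact h.2 (antitone_nat_of_succ_le fun n => (h' n).le)
  obtain ⟨x, hx⟩ := exists_mem_diag_of_le_of_le ℓ hK hu hi hj
  exact hdiag x hx

lemma hasConeWitness_of_not_bddAbove (ℓ : E ≃L[ℝ] ℝ) (hK : IsMWConvex K)
    (hu : ∀ n, (u n, u (n + 1)) ∈ K) {γ : E} (hγrec : ((0 : E), γ) ∈ recCone K)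
    (hunb : ¬BddAbove (range fun n => ℓ (u n)))
    (hγ : 0 < ℓ γ ∨ γ = 0 ∧ Monotone fun n => ℓ (u n)) : HasConeWitness K γ := by
  by_cases hR : ∃ r ∈ recCone K, 0 < ℓ r.1 ∧ 0 < ℓ r.2
  · obtain ⟨r, hr, h₁, h₂⟩ := hR
    obtain ⟨n, hn⟩ := exists_le_succ_of_not_bddAbove hunb
    refine hasConeWitness_of_pos_of_pos ℓ hr h₁ h₂ (hu n) hn ?_
    rcases hγ with hγ | ⟨rfl, -⟩
    · exact hγ.le
    · simp
  · push Not at hR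
    obtain ⟨hγ0, hnm⟩ :=
      nonpos_and_not_monotone_of_not_bddAbove (ℓ : E →L[ℝ] ℝ) hK hu hγrec hunb hR
    rcases hγ with hγ | ⟨-, hmono⟩
    · exact absurd hγ0 hγ.not_ge
    · exact absurd hmono hnm

lemma hasConeWitness_zero_of_monotone (ℓ : E ≃L[ℝ] ℝ) (hK : IsMWConvex K)
    (hu : ∀ n, (u n, u (n + 1)) ∈ K) (hmono : Monotone fun n => ℓ (u n)) :
    HasConeWitness K 0 := by
  by_cases hbdd : BddAbove (range fun n => ℓ (u n))
  · obtain ⟨x, hx⟩ := exists_mem_diag_of_monotone_of_bddAbove ℓ hK.1 hu hmono hbdd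
    exact hasConeWitness_zero_of_mem hx
  · exact hasConeWitness_of_not_bddAbove ℓ hK hu (zero_mem_recCone K) hbdd
      (Or.inr ⟨rfl, hmono⟩)

end Line

theorem witness_dim_one
    {E : Type*} [NormedAddCommGroup E] [InnerProductSpace ℝ E] [FiniteDimensional ℝ E]
    (hdim : Module.finrank ℝ E = 1)
    (K : Set (E × E)) (hK : IsMWConvex K)
    (u : ℕ → E) (hu : ∀ n : ℕ, (u n, u (n + 1)) ∈ K)
    (γ : E) (hγ : γ ∈ coneHull (principalDirections u))
    (hγrec : ((0 : E), γ) ∈ recCone K) :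
    ∃ (a : ℝ) (C : Set E) (x y : E),
      a ≠ 0 ∧
      IsClosed C ∧ Convex ℝ C ∧
      (∀ c ∈ C, ∀ l : ℝ, 0 ≤ l → l • c ∈ C) ∧
      (∀ c ∈ C, a • c ∈ C) ∧
      (∀ c ∈ C, ((c, a • c) : E × E) ∈ recCone K) ∧
      (x, y) ∈ K ∧
      y - x ∈ C ∧
      γ ∈ C := by
  let L : E ≃L[ℝ] ℝ := .ofFinrankEq (by rw [hdim, Module.finrank_self])
  let L' : E ≃L[ℝ] ℝ := L.trans (.neg ℝ)
  change HasConeWitness K γ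
  rcases eq_or_ne γ 0 with rfl | hγ0
  · by_cases hdiag : ∃ x, (x, x) ∈ K
    · obtain ⟨x, hx⟩ := hdiag
      exact hasConeWitness_zero_of_mem hx
    · push Not at hdiag
      rcases monotone_or_antitone_of_forall_not_mem_diag L hK.2.1 hu hdiag with hmono | hanti
      · exact hasConeWitness_zero_of_monotone L hK hu hmono
      · exact hasConeWitness_zero_of_monotone L' hK hu hanti.neg
  · have hwitness : ∀ ℓ : E ≃L[ℝ] ℝ, 0 < ℓ γ → HasConeWitness K γ := fun ℓ hℓ =>
      hasConeWitness_of_not_bddAbove ℓ hK hu hγrec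
        (not_bddAbove_of_mem_coneHull_principalDirections (ℓ : E →L[ℝ] ℝ) hγ hℓ) (Or.inl hℓ)
    rcases (L.map_ne_zero_iff.2 hγ0).lt_or_gt with hneg | hpos
    · exact hwitness L' (by simpa [L'] using hneg)
    · exact hwitness L hpos
end

section
/- Let E be a finite-dimensional real normed vector space and let K ⊆ E × E be a closed convex set. Let Δ_E = {(x, x) : x ∈ E} ⊆ E × E be the diagonal. Then K ∩ Δ_E ≠ ∅ if and only if there exists a bounded sequence (u_n)_{n∈ℕ} in E such that (u_n, u_{n+1}) ∈ K for all n ∈ ℕ. -/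
/-! The Cesàro means of the pairs `(u n, u (n + 1))` lie in `K` by convexity and stay bounded,
while the difference of their two coordinates telescopes to `(u (N + 1) - u 0) / (N + 1) → 0`.
By compactness a subsequence converges, and its limit is a point of `K` on the diagonal. -/

open Filter Finset Topology

section CesaroMean

variable {F G : Type*}

noncomputable def cesaroMean [AddCommMonoid F] [Module ℝ F] (v : ℕ → F) (N : ℕ) : F :=
  ((N : ℝ) + 1)⁻¹ • ∑ n ∈ range (N + 1), v n

theorem LinearMap.map_cesaroMean [AddCommMonoid F] [Module ℝ F] [AddCommMonoid G] [Module ℝ G]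
    (f : F →ₗ[ℝ] G) (v : ℕ → F) (N : ℕ) :
    f (cesaroMean v N) = cesaroMean (fun n => f (v n)) N := by
  simp only [cesaroMean, map_smul, map_sum]

theorem Convex.cesaroMean_mem [AddCommGroup F] [Module ℝ F] {s : Set F} (hs : Convex ℝ s)
    {v : ℕ → F} (hv : ∀ n, v n ∈ s) (N : ℕ) : cesaroMean v N ∈ s := by
  rw [cesaroMean, smul_sum]
  refine hs.sum_mem (fun _ _ => by positivity) ?_ (fun n _ => hv n)
  rw [sum_const, card_range, nsmul_eq_mul]
  push_cast
  exact mul_inv_cancel₀ (by positivity)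

variable [SeminormedAddCommGroup F] [NormedSpace ℝ F]

theorem norm_cesaroMean_le {v : ℕ → F} {M : ℝ} (hv : ∀ n, ‖v n‖ ≤ M) (N : ℕ) :
    ‖cesaroMean v N‖ ≤ M := by
  have hN : (0 : ℝ) < N + 1 := by positivity
  calc ‖cesaroMean v N‖ ≤ ((N : ℝ) + 1)⁻¹ * ∑ n ∈ range (N + 1), ‖v n‖ := by
        rw [cesaroMean, norm_smul, norm_inv, Real.norm_of_nonneg hN.le]
        gcongr
        exact norm_sum_le _ _
    _ ≤ ((N : ℝ) + 1)⁻¹ * ((N + 1) * M) := by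
        gcongr
        simpa using sum_le_sum fun n (_ : n ∈ range (N + 1)) => hv n
    _ = M := by field_simp

theorem cesaroMean_sub_shift (v : ℕ → F) (N : ℕ) :
    cesaroMean (fun n => v (n + 1) - v n) N = ((N : ℝ) + 1)⁻¹ • (v (N + 1) - v 0) := by
  rw [cesaroMean, sum_range_sub]

theorem tendsto_cesaroMean_sub_shift_zero {v : ℕ → F} {M : ℝ} (hv : ∀ n, ‖v n‖ ≤ M) :
    Tendsto (cesaroMean fun n => v (n + 1) - v n) atTop (𝓝 0) := by
  have hbound : Tendsto (fun N : ℕ => 1 / ((N : ℝ) + 1) * (2 * M)) atTop (𝓝 0) := by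
    simpa using tendsto_one_div_add_atTop_nhds_zero_nat.mul_const (2 * M)
  refine squeeze_zero_norm (fun N => ?_) hbound
  have hN : (0 : ℝ) < N + 1 := by positivity
  rw [cesaroMean_sub_shift, norm_smul, norm_inv, Real.norm_of_nonneg hN.le, ← one_div]
  gcongr
  linarith [norm_sub_le (v (N + 1)) (v 0), hv (N + 1), hv 0]

end CesaroMean

theorem exists_mem_diagonal_of_bounded_orbit {E : Type*} [NormedAddCommGroup E]
    [NormedSpace ℝ E] [ProperSpace E] {K : Set (E × E)} (hclosed : IsClosed K)
    (hconv : Convex ℝ K) {u : ℕ → E} {M : ℝ} (hM : ∀ n, ‖u n‖ ≤ M)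
    (hu : ∀ n, (u n, u (n + 1)) ∈ K) : ∃ p ∈ K, p.1 = p.2 := by
  set z : ℕ → E × E := cesaroMean fun n => (u n, u (n + 1))
  have hz_bdd : ∀ N, z N ∈ Metric.closedBall 0 M := fun N =>
    mem_closedBall_zero_iff.2 <| norm_cesaroMean_le (fun n => norm_prod_le_iff.2 ⟨hM n, hM _⟩) N
  obtain ⟨p, -, φ, hφ, hzφ⟩ := tendsto_subseq_of_bounded Metric.isBounded_closedBall hz_bdd
  have hpK : p ∈ K :=
    hclosed.mem_of_tendsto hzφ (Eventually.of_forall fun k => hconv.cesaroMean_mem hu (φ k))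
  have hdiff : ∀ N, (z N).2 - (z N).1 = cesaroMean (fun n => u (n + 1) - u n) N := fun N =>
    (LinearMap.snd ℝ E E - LinearMap.fst ℝ E E).map_cesaroMean _ N
  have hdiff_lim : Tendsto (fun k => (z (φ k)).2 - (z (φ k)).1) atTop (𝓝 (p.2 - p.1)) :=
    hzφ.snd_nhds.sub hzφ.fst_nhds
  have hdiff_zero : Tendsto (fun k => (z (φ k)).2 - (z (φ k)).1) atTop (𝓝 0) := by
    simp only [hdiff]
    exact (tendsto_cesaroMean_sub_shift_zero hM).comp hφ.tendsto_atTop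
  exact ⟨p, hpK, (sub_eq_zero.1 (tendsto_nhds_unique hdiff_lim hdiff_zero)).symm⟩

theorem fixed_point_iff_bounded_sequence
    {E : Type*} [NormedAddCommGroup E] [NormedSpace ℝ E] [FiniteDimensional ℝ E]
    (K : Set (E × E)) (hclosed : IsClosed K) (hconv : Convex ℝ K) :
    (K ∩ {p : E × E | p.1 = p.2}).Nonempty ↔
      ∃ u : ℕ → E, (∃ M : ℝ, ∀ n : ℕ, ‖u n‖ ≤ M) ∧ ∀ n : ℕ, (u n, u (n + 1)) ∈ K := by
  constructor
  · rintro ⟨⟨x, y⟩, hK, rfl : x = y⟩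
    exact ⟨fun _ => x, ⟨‖x‖, fun _ => le_rfl⟩, fun _ => hK⟩
  · rintro ⟨u, ⟨M, hM⟩, hu⟩
    have : ProperSpace E := FiniteDimensional.proper_real E
    exact exists_mem_diagonal_of_bounded_orbit hclosed hconv hM hu
end

section
/- Let K ⊆ ℝ^d be a nonempty MW-convex set and let π : ℝ^d → ℝ^d be a linear projection (a linear map with π ∘ π = π). Then rec(π(K)) ⊆ π(rec(K)). -/
/-!
Write `K = K' + C` with `C = rec K`. Then `π K = π K' + π C`, where `π K'` is compact and `π C` is
a convex cone, though not necessarily a closed one; so it suffices that `rec (A + D) ⊆ D` for every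
nonempty compact `A` and convex cone `D` in a finite-dimensional space.

If `z ∈ rec (A + D) \ D`, a nonzero functional `f` with `f ≤ 0` on `D` and `f z ≥ 0` separates
them. Translating a maximiser of `f` on `A` by `z` forces `f z = 0`, and then `z` recedes from the
sum of the faces of `A` and `D` on which `f` is maximal. The face of `D` and `z` lie in `ker f`,
where a linear retraction `E → ker f` is the identity, so the claim passes down to `ker f` and
follows by induction on the dimension.
-/

open Pointwise

section recCone

variable {E F : Type*} [AddCommGroup E] [Module ℝ E] [AddCommGroup F] [Module ℝ F]

def recPointedCone (K : Set E) : PointedCone ℝ E where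
  carrier := recCone K
  zero_mem' w hw l _ := by simpa using hw
  add_mem' {x y} hx hy w hw l hl := by
    simpa only [smul_add, add_assoc] using hy _ (hx w hw l hl) l hl
  smul_mem' c x hx w hw l hl := by
    change w + l • ((c : ℝ) • x) ∈ K
    simpa only [smul_smul] using hx w hw (l * c) (mul_nonneg hl c.2)

theorem image_recCone_subset_recCone_image (L : E →ₗ[ℝ] F) (K : Set E) :
    L '' recCone K ⊆ recCone (L '' K) := by
  rintro _ ⟨z, hz, rfl⟩ _ ⟨w, hw, rfl⟩ l hl
  exact ⟨w + l • z, hz w hw l hl, by simp⟩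

theorem apply_nonpos_of_mem_recCone_add {A D : Set E} {z : E} (hz : z ∈ recCone (A + D))
    {f : E →ₗ[ℝ] ℝ} {a₀ : E} (ha₀ : a₀ ∈ A) (hmax : IsMaxOn f A a₀) (hD₀ : (0 : E) ∈ D)
    (hD : ∀ e ∈ D, f e ≤ 0) : f z ≤ 0 := by
  obtain ⟨a, ha, e, he, heq⟩ := hz (a₀ + 0) (Set.add_mem_add ha₀ hD₀) 1 zero_le_one
  have hsum : f a + f e = f a₀ + f z := by simpa using congrArg f heq
  have ha_le : f a ≤ f a₀ := hmax ha
  linarith [hD e he]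

theorem mem_recCone_face_add_face {A D : Set E} {z : E} (hz : z ∈ recCone (A + D))
    {f : E →ₗ[ℝ] ℝ} {a₀ : E} (hmax : IsMaxOn f A a₀) (hD : ∀ e ∈ D, f e ≤ 0) (hfz : f z = 0) :
    z ∈ recCone ((A ∩ f ⁻¹' {f a₀}) + (D ∩ LinearMap.ker f)) := by
  rintro _ ⟨a, ⟨haA, hfa⟩, e, ⟨heD, hfe⟩, rfl⟩ l hl
  obtain ⟨a', ha', e', he', heq⟩ := hz (a + e) (Set.add_mem_add haA heD) l hl
  have hsum : f a' + f e' = f a₀ := by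
    simp only [Set.mem_preimage, Set.mem_singleton_iff] at hfa
    rw [SetLike.mem_coe, LinearMap.mem_ker] at hfe
    simpa [hfa, hfe, hfz] using congrArg f heq
  have ha'_le : f a' ≤ f a₀ := hmax ha'
  refine ⟨a', ⟨ha', ?_⟩, e', ⟨he', ?_⟩, heq⟩
  · show f a' = f a₀
    linarith [hD e' he']
  · show f e' = 0
    linarith [hD e' he']

end recCone

section FiniteDimensional

variable {E : Type*} [NormedAddCommGroup E] [NormedSpace ℝ E] [FiniteDimensional ℝ E]

theorem PointedCone.exists_dual_nonpos_of_notMem {D : PointedCone ℝ E} {z : E} (hz : z ∉ D) :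
    ∃ f : E →ₗ[ℝ] ℝ, f ≠ 0 ∧ (∀ x ∈ D, f x ≤ 0) ∧ 0 ≤ f z := by
  by_cases hspan : Submodule.span ℝ (D : Set E) = ⊤
  · have haff : affineSpan ℝ (D : Set E) = ⊤ := by
      rw [AffineSubspace.affineSpan_eq_top_iff_vectorSpan_eq_top_of_nonempty ℝ E E ⟨0, D.zero_mem⟩,
        vectorSpan_eq_span_vsub_set_right ℝ (D.zero_mem : (0 : E) ∈ (D : Set E))]
      simpa using hspan
    obtain ⟨f, hf0, hf⟩ := geometric_hahn_banach_of_nonempty_interior_point D.convex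
      (fun h => hz (interior_subset h)) (D.convex.interior_nonempty_iff_affineSpan_eq_top.mpr haff)
    have hfz : 0 ≤ f z := by simpa using hf 0 D.zero_mem
    refine ⟨f, fun h => hf0 (ContinuousLinearMap.coe_injective h), fun x hx => ?_, hfz⟩
    -- `D` is a cone, so the bound `f ≤ f z` on `D` improves to `f ≤ 0`.
    change f x ≤ 0
    by_contra! hfx
    have := hf (((f z + 1) / f x) • x) (D.smul_mem (by positivity) hx)
    rw [map_smul, smul_eq_mul, div_mul_cancel₀ _ hfx.ne'] at this
    linarith
  · obtain ⟨f, hf0, hDf⟩ := Submodule.exists_le_ker_of_lt_top _ (lt_top_iff_ne_top.mpr hspan)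
    have hfD : ∀ x ∈ D, f x = 0 := fun x hx => hDf (Submodule.subset_span hx)
    rcases le_total 0 (f z) with hfz | hfz
    · exact ⟨f, hf0, fun x hx => (hfD x hx).le, hfz⟩
    · exact ⟨-f, neg_ne_zero.mpr hf0, fun x hx => by simp [hfD x hx], by simpa using hfz⟩

theorem IsCompact.recCone_add_subset {A : Set E} (hA : IsCompact A) (hAne : A.Nonempty)
    (D : PointedCone ℝ E) : recCone (A + (D : Set E)) ⊆ D := by
  induction hn : Module.finrank ℝ E using Nat.strong_induction_on generalizing E with
  | _ n ih =>
    intro z hz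
    by_contra hzD
    obtain ⟨f, hf0, hfD, hfz⟩ := D.exists_dual_nonpos_of_notMem hzD
    obtain ⟨a₀, ha₀, hmax⟩ := hA.exists_isMaxOn hAne f.continuous_of_finiteDimensional.continuousOn
    have hfz0 : f z = 0 :=
      le_antisymm (apply_nonpos_of_mem_recCone_add hz ha₀ hmax D.zero_mem hfD) hfz
    set W := LinearMap.ker f
    set A₁ := A ∩ f ⁻¹' {f a₀}
    set D₁ : PointedCone ℝ E := D ⊓ W
    have hz₁ : z ∈ recCone (A₁ + (D₁ : Set E)) := mem_recCone_face_add_face hz hmax hfD hfz0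
    obtain ⟨P, hP⟩ := W.subtype.exists_leftInverse_of_injective W.ker_subtype
    have hPW : ∀ w : W, P w = w := LinearMap.congr_fun hP
    have hA₁ : IsCompact A₁ :=
      hA.inter_right (isClosed_singleton.preimage f.continuous_of_finiteDimensional)
    have hrank : Module.finrank ℝ W < n :=
      hn ▸ Submodule.finrank_lt (mt LinearMap.ker_eq_top.mp hf0)
    have hPz : P z ∈ D₁.map P := by
      refine ih _ hrank (hA₁.image P.continuous_of_finiteDimensional)
        (Set.Nonempty.image P ⟨a₀, ha₀, rfl⟩) _ rfl ?_
      rw [PointedCone.coe_map, ← Set.image_add]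
      exact image_recCone_subset_recCone_image P _ ⟨z, hz₁, rfl⟩
    obtain ⟨d, ⟨hdD, hdW⟩, hPd⟩ := PointedCone.mem_map.mp hPz
    have hdz : d = z := by
      simpa only [hPW ⟨d, hdW⟩, hPW ⟨z, hfz0⟩] using congrArg Subtype.val hPd
    exact hzD (hdz ▸ hdD)

end FiniteDimensional

theorem recCone_image_subset_image_recCone_general
    {d : ℕ} (K : Set (EuclideanSpace ℝ (Fin d))) (hne : K.Nonempty) (hK : IsMWConvex K)
    (π : EuclideanSpace ℝ (Fin d) →ₗ[ℝ] EuclideanSpace ℝ (Fin d)) :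
    recCone (π '' K) ⊆ π '' recCone K := by
  obtain ⟨-, -, K', hK', -, hKeq⟩ := hK
  have hK'ne : K'.Nonempty := (hKeq ▸ hne).of_add_left
  have hπK : π '' K = π '' K' + ((recPointedCone K).map π : Set _) := by
    rw [PointedCone.coe_map, ← Set.image_add]
    exact congrArg (π '' ·) hKeq
  calc recCone (π '' K) = recCone (π '' K' + ((recPointedCone K).map π : Set _)) := by rw [hπK]
    _ ⊆ (recPointedCone K).map π :=
      (hK'.image π.continuous_of_finiteDimensional).recCone_add_subset (hK'ne.image π) _
    _ = π '' recCone K := PointedCone.coe_map _ _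

theorem recCone_image_subset_image_recCone
    {d : ℕ} (K : Set (EuclideanSpace ℝ (Fin d))) (hne : K.Nonempty) (hK : IsMWConvex K)
    (π : EuclideanSpace ℝ (Fin d) →ₗ[ℝ] EuclideanSpace ℝ (Fin d))
    (hproj : ∀ x, π (π x) = π x) :
    recCone (π '' K) ⊆ π '' recCone K :=
  recCone_image_subset_image_recCone_general K hne hK π
end
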